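/- arXiv:1008.2894 — 2 statements merged into one kernel-verified Lean document; each statement's English description precedes it below -/
import Mathlib

section
/- For all positive integers n, nonnegative integers r, and ε ∈ {1, -1}, the sum over k from 0 to n-1 of ε^k·(2k+1)^{2r+1}·D_k is divisible by n, where D_k is the k-th central Delannoy number. -/
/-!
Since `C(k+j, 2j) C(2j, j) = C(k+j, j) C(k, j)`, we have `D_k = ∑_j T_j(k)` with
`T_j(k) = C(k+j, j) C(k, j)` (`delannoyTerm j k`), and these terms satisfy
`(2k+1)² T_j(k) = 4(j+1)² T_{j+1}(k) + (2j+1)² T_j(k)`. Hence, by induction on `r`, it suffices to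
prove `n ∣ ∑_{k<n} ε^k (2k+1) T_j(k)` for every single `j`. Both of these sums telescope:
`∑_{k<n} (2k+1) T_j(k) = n C(n+j, j) C(n, j+1)` and
`∑_{k<n} (-1)^k (2k+1) T_j(k) = (-1)^(n+1) C(n+j, j) (j+1) C(n, j+1)`,
where `(j+1) C(n, j+1) = n C(n-1, j)`.
-/

def delannoy (n : ℕ) : ℕ :=
  ∑ k ∈ Finset.range (n + 1), Nat.choose (n + k) (2 * k) * Nat.choose (2 * k) k

open Finset

def delannoyTerm (j k : ℕ) : ℤ := (k + j).choose j * k.choose j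

lemma delannoyTerm_eq_zero_of_lt {j k : ℕ} (h : k < j) : delannoyTerm j k = 0 := by
  simp [delannoyTerm, Nat.choose_eq_zero_of_lt h]

lemma choose_add_mul_choose_two_mul (k j : ℕ) :
    (k + j).choose (2 * j) * (2 * j).choose j = (k + j).choose j * k.choose j := by
  rw [Nat.choose_mul (by omega), show k + j - j = k by omega, show 2 * j - j = j by omega]

lemma delannoy_eq_sum_delannoyTerm {k N : ℕ} (hk : k < N) :
    (delannoy k : ℤ) = ∑ j ∈ range N, delannoyTerm j k := by
  have h : (delannoy k : ℤ) = ∑ j ∈ range (k + 1), delannoyTerm j k := by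
    simp only [delannoy, choose_add_mul_choose_two_mul, delannoyTerm]
    push_cast
    rfl
  rw [h]
  refine sum_subset (range_subset_range.2 hk) fun j _ hj => ?_
  exact delannoyTerm_eq_zero_of_lt (by simpa using hj)

/-- `Nat.choose_succ_right_eq` without truncated subtraction. -/
lemma succ_mul_choose_succ_right (m j : ℕ) :
    ((j : ℤ) + 1) * m.choose (j + 1) = ((m : ℤ) - j) * m.choose j := by
  have h₁ := Nat.add_one_mul_choose_eq m j
  have h₂ := Nat.choose_succ_succ' m j
  zify at h₁ h₂
  linear_combination -h₁ - ((j : ℤ) + 1) * h₂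

lemma succ_mul_choose_succ_succ (m j : ℕ) :
    ((j : ℤ) + 1) * (m + 1).choose (j + 1) = ((m : ℤ) + 1) * m.choose j := by
  have h := Nat.add_one_mul_choose_eq m j
  zify at h
  linear_combination -h

lemma succ_mul_choose_add_succ (n j : ℕ) :
    ((n : ℤ) + 1) * (n + 1 + j).choose j = ((n : ℤ) + j + 1) * (n + j).choose j := by
  have h := Nat.choose_mul_succ_eq (n + j) j
  rw [show n + j + 1 - j = n + 1 by omega, show n + j + 1 = n + 1 + j by omega] at h
  zify at h
  linear_combination -h

lemma sq_mul_delannoyTerm (j k : ℕ) :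
    (2 * (k : ℤ) + 1) ^ 2 * delannoyTerm j k
      = 4 * ((j : ℤ) + 1) ^ 2 * delannoyTerm (j + 1) k
        + (2 * (j : ℤ) + 1) ^ 2 * delannoyTerm j k := by
  have h₁ := succ_mul_choose_succ_succ (k + j) j
  have h₂ := succ_mul_choose_succ_right k j
  rw [show k + j + 1 = k + (j + 1) by omega] at h₁
  push_cast at h₁
  unfold delannoyTerm
  linear_combination (-4 * ((j : ℤ) + 1) * k.choose (j + 1)) * h₁
    - 4 * ((k : ℤ) + j + 1) * (k + j).choose j * h₂

lemma sum_odd_mul_delannoyTerm (j n : ℕ) :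
    ∑ k ∈ range n, (2 * (k : ℤ) + 1) * delannoyTerm j k
      = n * (n + j).choose j * n.choose (j + 1) := by
  let F : ℕ → ℤ := fun m => m * (m + j).choose j * m.choose (j + 1)
  have step (m : ℕ) : F (m + 1) - F m = (2 * (m : ℤ) + 1) * delannoyTerm j m := by
    have h₁ := succ_mul_choose_add_succ m j
    have h₂ := succ_mul_choose_succ_right m j
    have h₃ := Nat.choose_succ_succ' m j
    zify at h₃
    simp only [F, delannoyTerm]
    push_cast
    linear_combination ((m + 1).choose (j + 1) : ℤ) * h₁
      + ((m : ℤ) + j + 1) * (m + j).choose j * h₃ + ((m + j).choose j : ℤ) * h₂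
  rw [← sum_congr rfl fun m _ => step m, sum_range_sub]
  simp [F]

lemma sum_neg_one_pow_odd_mul_delannoyTerm (j n : ℕ) :
    ∑ k ∈ range n, (-1) ^ k * (2 * (k : ℤ) + 1) * delannoyTerm j k
      = (-1) ^ (n + 1) * (n + j).choose j * (((j : ℤ) + 1) * n.choose (j + 1)) := by
  let F : ℕ → ℤ := fun m => (-1) ^ (m + 1) * (m + j).choose j * (((j : ℤ) + 1) * m.choose (j + 1))
  have step (m : ℕ) : F (m + 1) - F m = (-1) ^ m * (2 * (m : ℤ) + 1) * delannoyTerm j m := by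
    have h₁ := succ_mul_choose_add_succ m j
    have h₂ := succ_mul_choose_succ_right m j
    have h₄ := succ_mul_choose_succ_succ m j
    simp only [F, delannoyTerm]
    linear_combination (-1 : ℤ) ^ m * (((m + 1 + j).choose j : ℤ) * h₄
      + (m.choose j : ℤ) * h₁ + ((m + j).choose j : ℤ) * h₂)
  rw [← sum_congr rfl fun m _ => step m, sum_range_sub]
  simp [F]

lemma dvd_succ_mul_choose_succ (n j : ℕ) : (n : ℤ) ∣ ((j : ℤ) + 1) * n.choose (j + 1) := by
  cases n with
  | zero => simp
  | succ m => exact ⟨m.choose j, by rw [succ_mul_choose_succ_succ]; push_cast; ring⟩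

lemma dvd_sum_sign_mul_odd_mul_delannoyTerm (n j : ℕ) {ε : ℤ} (hε : ε = 1 ∨ ε = -1) :
    (n : ℤ) ∣ ∑ k ∈ range n, ε ^ k * (2 * (k : ℤ) + 1) * delannoyTerm j k := by
  rcases hε with rfl | rfl
  · simp only [one_pow, one_mul, sum_odd_mul_delannoyTerm, mul_assoc]
    exact dvd_mul_right _ _
  · rw [sum_neg_one_pow_odd_mul_delannoyTerm]
    exact (dvd_succ_mul_choose_succ n j).mul_left _

lemma dvd_sum_mul_odd_pow_mul_delannoyTerm {d : ℤ} {n : ℕ} (w : ℕ → ℤ)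
    (h : ∀ j, d ∣ ∑ k ∈ range n, w k * (2 * (k : ℤ) + 1) * delannoyTerm j k) (r j : ℕ) :
    d ∣ ∑ k ∈ range n, w k * (2 * (k : ℤ) + 1) ^ (2 * r + 1) * delannoyTerm j k := by
  induction r generalizing j with
  | zero => simpa using h j
  | succ r ih =>
    have split (k : ℕ) : w k * (2 * (k : ℤ) + 1) ^ (2 * (r + 1) + 1) * delannoyTerm j k
        = 4 * ((j : ℤ) + 1) ^ 2 * (w k * (2 * (k : ℤ) + 1) ^ (2 * r + 1) * delannoyTerm (j + 1) k)
          + (2 * (j : ℤ) + 1) ^ 2 * (w k * (2 * (k : ℤ) + 1) ^ (2 * r + 1) * delannoyTerm j k) := by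
      linear_combination w k * (2 * (k : ℤ) + 1) ^ (2 * r + 1) * sq_mul_delannoyTerm j k
    simp only [split, sum_add_distrib, ← mul_sum]
    exact dvd_add ((ih (j + 1)).mul_left _) ((ih j).mul_left _)

theorem stmt3_general (n : ℕ) (r : ℕ) (ε : ℤ) (hε : ε = 1 ∨ ε = -1) :
    (n : ℤ) ∣ ∑ k ∈ Finset.range n,
      ε ^ k * (2 * (k : ℤ) + 1) ^ (2 * r + 1) * delannoy k := by
  have swap : ∑ k ∈ range n, ε ^ k * (2 * (k : ℤ) + 1) ^ (2 * r + 1) * delannoy k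
      = ∑ j ∈ range n, ∑ k ∈ range n,
          ε ^ k * (2 * (k : ℤ) + 1) ^ (2 * r + 1) * delannoyTerm j k := by
    rw [sum_comm]
    refine sum_congr rfl fun k hk => ?_
    rw [delannoy_eq_sum_delannoyTerm (mem_range.1 hk), mul_sum]
  rw [swap]
  exact dvd_sum fun j _ => dvd_sum_mul_odd_pow_mul_delannoyTerm (ε ^ ·)
    (dvd_sum_sign_mul_odd_mul_delannoyTerm n · hε) r j

theorem stmt3 (n : ℕ) (hn : 0 < n) (r : ℕ) (ε : ℤ) (hε : ε = 1 ∨ ε = -1) :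
    (n : ℤ) ∣ ∑ k ∈ Finset.range n,
      ε ^ k * (2 * (k : ℤ) + 1) ^ (2 * r + 1) * delannoy k :=
  stmt3_general n r ε hε
end

section
/- For every prime p > 3, the sum ∑_{k=0}^{p-1} C(p+k, k+1)·C(p+k, k)·C(p-1, k)^2 is congruent to 1 modulo 2p^3. -/
/-!
Write `T k = binomTerm p k` for the summand and `A k = C(p+k, k) * C(p-1, k)`. Then
`(k+1) * T k = p * (A k)^2`, and `A k * (k!)^2` is the product of `p^2 - i^2` over `1 ≤ i ≤ k`;
as `p^4 ≡ 0`, modulo `p^3` this gives `A k = (-1)^k (1 - p^2 ∑_{i ≤ k} i⁻²)`, so `p * (A k)^2 ≡ p`.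
The terms with `k < p - 1` therefore add up to `p * H_{p-1}`, which vanishes modulo `p^3` by
Wolstenholme's pairing `i⁻¹ + (p-i)⁻¹ = p / (i (p-i))` together with `∑ i⁻² ≡ 0 (mod p)` for
`p > 3`; the same congruence gives `T (p-1) = (A (p-1))^2 ≡ 1`. Modulo `2`,
`p * A k = (2k+1) * C(p+k, 2k+1) * C(2k, k)` is even for `k ≥ 1`, so only `T 0 = p` survives.
-/

open Finset Nat

def binomTerm (n k : ℕ) : ℕ :=
  (n + k).choose (k + 1) * (n + k).choose k * (n - 1).choose k ^ 2

theorem binomTerm_zero (n : ℕ) : binomTerm n 0 = n := by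
  simp [binomTerm]

theorem succ_mul_binomTerm (n k : ℕ) :
    (k + 1) * binomTerm n k = n * ((n + k).choose k * (n - 1).choose k) ^ 2 := by
  have h : (n + k).choose (k + 1) * (k + 1) = (n + k).choose k * n := by
    rw [choose_succ_right_eq, Nat.add_sub_cancel]
  calc (k + 1) * binomTerm n k
      = (n + k).choose (k + 1) * (k + 1) * ((n + k).choose k * (n - 1).choose k ^ 2) := by
        rw [binomTerm]; ring
    _ = n * ((n + k).choose k * (n - 1).choose k) ^ 2 := by rw [h]; ring

namespace Nat

theorem choose_mul_choose_mul_factorial_sq (R : Type*) [CommRing R] {n k : ℕ} (hk : k < n) :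
    (((n + k).choose k * (n - 1).choose k * k ! ^ 2 : ℕ) : R) =
      ∏ i ∈ range k, ((n : R) ^ 2 - ((i : R) + 1) ^ 2) := by
  obtain ⟨m, rfl⟩ := Nat.exists_eq_add_one_of_ne_zero (n := n) (by omega)
  have hprod : (m + 1 + k).choose k * m.choose k * k ! ^ 2 =
      (m + 1 + 1).ascFactorial k * m.descFactorial k := by
    rw [ascFactorial_eq_factorial_mul_choose, descFactorial_eq_factorial_mul_choose,
      Nat.add_right_comm]
    ring
  rw [Nat.add_sub_cancel, hprod, ascFactorial_eq_prod_range, descFactorial_eq_prod_range,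
    ← prod_mul_distrib, Nat.cast_prod]
  refine prod_congr rfl fun i hi => ?_
  have hi : i ≤ m := by rw [mem_range] at hi; omega
  push_cast [Nat.cast_sub hi]
  ring

theorem mul_choose_mul_choose (n k : ℕ) :
    n * ((n + k).choose k * (n - 1).choose k) =
      (2 * k + 1) * (n + k).choose (2 * k + 1) * k.centralBinom := by
  rcases lt_or_ge k n with hk | hk
  · have hsucc : n * (n - 1).choose k = n.choose (k + 1) * (k + 1) := by
      simpa [Nat.sub_add_cancel (by omega : 1 ≤ n)] using add_one_mul_choose_eq (n - 1) k
    have hcentral : (2 * k + 1) * k.centralBinom = (2 * k + 1).choose k * (k + 1) := by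
      rw [centralBinom, add_one_mul_choose_eq, choose_symm_half]
    have hmul := choose_mul (n := n + k) (k := 2 * k + 1) (s := k) (by omega)
    rw [show n + k - k = n by omega, show 2 * k + 1 - k = k + 1 by omega] at hmul
    calc n * ((n + k).choose k * (n - 1).choose k)
        = (n + k).choose k * (n.choose (k + 1) * (k + 1)) := by rw [← hsucc]; ring
      _ = (n + k).choose (2 * k + 1) * ((2 * k + 1).choose k * (k + 1)) := by
          rw [← mul_assoc, ← hmul]; ring
      _ = (2 * k + 1) * (n + k).choose (2 * k + 1) * k.centralBinom := by rw [← hcentral]; ring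
  · rw [choose_eq_zero_of_lt (by omega : n + k < 2 * k + 1)]
    rcases Nat.eq_zero_or_pos n with rfl | hn
    · simp
    · rw [choose_eq_zero_of_lt (by omega : n - 1 < k)]; simp

theorem two_dvd_choose_mul_choose {n k : ℕ} (hn : Odd n) (hk : 0 < k) :
    2 ∣ (n + k).choose k * (n - 1).choose k := by
  refine (Nat.coprime_two_left.2 hn).dvd_of_dvd_mul_left ?_
  rw [mul_choose_mul_choose]
  exact (two_dvd_centralBinom_of_one_le hk).mul_left _

end Nat

theorem two_dvd_binomTerm {n k : ℕ} (hn : Odd n) (hk : 0 < k) : 2 ∣ binomTerm n k :=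
  (two_dvd_choose_mul_choose hn hk).trans
    ⟨(n + k).choose (k + 1) * (n - 1).choose k, by rw [binomTerm]; ring⟩

theorem sum_binomTerm_modEq_two {n : ℕ} (hn : Odd n) :
    ∑ k ∈ range n, binomTerm n k ≡ 1 [MOD 2] := by
  obtain ⟨m, hm⟩ := Nat.exists_eq_add_one_of_ne_zero hn.pos.ne'
  have hdvd : 2 ∣ ∑ k ∈ range m, binomTerm n (k + 1) :=
    dvd_sum fun k _ => two_dvd_binomTerm hn k.succ_pos
  calc ∑ k ∈ range n, binomTerm n k = ∑ k ∈ range m, binomTerm n (k + 1) + n := by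
        rw [hm, sum_range_succ', binomTerm_zero]
    _ ≡ 0 + n [MOD 2] := (Nat.modEq_zero_iff_dvd.2 hdvd).add_right n
    _ ≡ 1 [MOD 2] := by rw [zero_add]; exact Nat.odd_iff.1 hn

theorem Finset.prod_one_add_mul_of_mul_self_eq_zero {ι R : Type*} [CommRing R] {ε : R}
    (hε : ε * ε = 0) (s : Finset ι) (c : ι → R) :
    ∏ i ∈ s, (1 + ε * c i) = 1 + ε * ∑ i ∈ s, c i := by
  classical
  induction s using Finset.induction with
  | empty => simp
  | insert a s ha ih =>
    rw [prod_insert ha, sum_insert ha, ih]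
    linear_combination c a * (∑ i ∈ s, c i) * hε

theorem FiniteField.sum_inv_sq {K : Type*} [Field K] [Fintype K] (hK : 3 < Fintype.card K) :
    ∑ x : K, x⁻¹ ^ 2 = 0 := by
  calc ∑ x : K, x⁻¹ ^ 2 = ∑ x : K, x ^ 2 := Equiv.sum_comp (Equiv.inv K) (· ^ 2)
    _ = 0 := FiniteField.sum_pow_lt_card_sub_one K 2 (by omega)

namespace ZMod

theorem sum_range_natCast {M : Type*} [AddCommMonoid M] (n : ℕ) [NeZero n] (f : ZMod n → M) :
    ∑ i ∈ range n, f i = ∑ x, f x :=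
  sum_nbij' (↑) val (fun _ _ => mem_univ _) (fun x _ => mem_range.2 x.val_lt)
    (fun _ hi => val_natCast_of_lt (mem_range.1 hi)) (fun x _ => natCast_zmod_val x) fun _ _ => rfl

theorem map_inv_of_isUnit {m : ℕ} {K : Type*} [DivisionRing K] (f : ZMod m →+* K) {x : ZMod m}
    (hx : IsUnit x) : f x⁻¹ = (f x)⁻¹ :=
  (inv_eq_of_mul_eq_one_right (by rw [← map_mul, mul_inv_of_unit x hx, map_one])).symm

theorem natCast_pow_self (p n : ℕ) : (p : ZMod (p ^ n)) ^ n = 0 := by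
  rw [← Nat.cast_pow, natCast_self]

variable {p : ℕ} [Fact p.Prime]

theorem isUnit_natCast_of_not_dvd {m : ℕ} (hm : ¬p ∣ m) (n : ℕ) : IsUnit (m : ZMod (p ^ n)) :=
  (isUnit_iff_coprime m (p ^ n)).2
    (((Nat.Prime.coprime_iff_not_dvd Fact.out).2 hm).symm.pow_right n)

theorem isUnit_natCast_add_one {i : ℕ} (hi : i + 1 < p) (n : ℕ) :
    IsUnit ((i : ZMod (p ^ n)) + 1) := by
  exact_mod_cast isUnit_natCast_of_not_dvd (Nat.not_dvd_of_pos_of_lt i.succ_pos hi) n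

theorem pow_mul_eq_zero_of_castHom_eq_zero {n : ℕ} {x : ZMod (p ^ (n + 1))}
    (hx : castHom (dvd_pow_self p n.succ_ne_zero) (ZMod p) x = 0) :
    (p : ZMod (p ^ (n + 1))) ^ n * x = 0 := by
  rw [castHom_apply, ← natCast_val, natCast_eq_zero_iff] at hx
  obtain ⟨t, ht⟩ := hx
  rw [← natCast_zmod_val x, ht, ← Nat.cast_pow, ← Nat.cast_mul, ← mul_assoc, ← pow_succ,
    Nat.cast_mul, natCast_self, zero_mul]

theorem sum_range_inv_add_one_sq (hp : 3 < p) :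
    ∑ i ∈ range (p - 1), ((i : ZMod p) + 1)⁻¹ ^ 2 = 0 := by
  have h := FiniteField.sum_inv_sq (K := ZMod p) (by rwa [ZMod.card])
  rw [← sum_range_natCast, show range p = range (p - 1 + 1) by congr; omega, sum_range_succ'] at h
  simpa using h

end ZMod

open ZMod

variable {p : ℕ} [Fact p.Prime]

theorem prime_sq_mul_sum_range_inv_add_one_sq (hp : 3 < p) :
    (p : ZMod (p ^ 3)) ^ 2 * ∑ i ∈ range (p - 1), ((i : ZMod (p ^ 3)) + 1)⁻¹ ^ 2 = 0 := by
  apply pow_mul_eq_zero_of_castHom_eq_zero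
  rw [map_sum, ← sum_range_inv_add_one_sq hp]
  refine sum_congr rfl fun i hi => ?_
  rw [map_pow, map_inv_of_isUnit _ (isUnit_natCast_add_one (by rw [mem_range] at hi; omega) _),
    map_add, map_natCast, map_one]

theorem natCast_choose_mul_choose {k : ℕ} (hk : k < p) :
    (((p + k).choose k * (p - 1).choose k : ℕ) : ZMod (p ^ 3)) =
      (-1) ^ k *
        (1 - (p : ZMod (p ^ 3)) ^ 2 * ∑ i ∈ range k, ((i : ZMod (p ^ 3)) + 1)⁻¹ ^ 2) := by
  set ε := (p : ZMod (p ^ 3)) ^ 2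
  have hε : ε * ε = 0 := by
    linear_combination (p : ZMod (p ^ 3)) * natCast_pow_self p 3
  have hunit : ∀ i ∈ range k, IsUnit ((i : ZMod (p ^ 3)) + 1) := fun i hi =>
    isUnit_natCast_add_one (by rw [mem_range] at hi; omega) 3
  have hfactor : ∀ i ∈ range k, ε - ((i : ZMod (p ^ 3)) + 1) ^ 2 =
      -1 * ((i : ZMod (p ^ 3)) + 1) ^ 2 * (1 + ε * -((i : ZMod (p ^ 3)) + 1)⁻¹ ^ 2) :=
    fun i hi => by
    linear_combination -ε * (((i : ZMod (p ^ 3)) + 1) * ((i : ZMod (p ^ 3)) + 1)⁻¹ + 1) *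
      mul_inv_of_unit _ (hunit i hi)
  have hfact : ((k ! : ℕ) : ZMod (p ^ 3)) = ∏ i ∈ range k, ((i : ZMod (p ^ 3)) + 1) := by
    rw [← prod_range_add_one_eq_factorial]; push_cast; rfl
  have hkey := choose_mul_choose_mul_factorial_sq (ZMod (p ^ 3)) (show k < p by omega)
  rw [prod_congr rfl hfactor, prod_mul_distrib, prod_mul_distrib, prod_const, card_range,
    prod_pow, ← hfact, prod_one_add_mul_of_mul_self_eq_zero hε, sum_neg_distrib, Nat.cast_mul,
    Nat.cast_pow] at hkey
  have hk! : IsUnit (((k ! : ℕ) : ZMod (p ^ 3)) ^ 2) :=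
    (isUnit_natCast_of_not_dvd (fun h => by rw [(Fact.out : p.Prime).dvd_factorial] at h; omega)
      3).pow 2
  refine hk!.mul_right_cancel ?_
  rw [hkey]
  ring

theorem natCast_choose_mul_choose_sq {k : ℕ} (hk : k < p) :
    (((p + k).choose k * (p - 1).choose k : ℕ) : ZMod (p ^ 3)) ^ 2 =
      1 - 2 * (p : ZMod (p ^ 3)) ^ 2 * ∑ i ∈ range k, ((i : ZMod (p ^ 3)) + 1)⁻¹ ^ 2 := by
  rw [natCast_choose_mul_choose hk, mul_pow, ← pow_mul, pow_mul', neg_one_sq, one_pow, one_mul]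
  linear_combination
    (p : ZMod (p ^ 3)) * (∑ i ∈ range k, ((i : ZMod (p ^ 3)) + 1)⁻¹ ^ 2) ^ 2 * natCast_pow_self p 3

theorem natCast_binomTerm {k : ℕ} (hk : k + 1 < p) :
    (binomTerm p k : ZMod (p ^ 3)) = p * ((k : ZMod (p ^ 3)) + 1)⁻¹ := by
  have h := congrArg (Nat.cast : ℕ → ZMod (p ^ 3)) (succ_mul_binomTerm p k)
  rw [Nat.cast_mul, Nat.cast_mul, Nat.cast_pow, natCast_choose_mul_choose_sq (by omega)] at h
  push_cast at h
  have hunit := isUnit_natCast_add_one hk 3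
  refine hunit.mul_left_cancel ?_
  rw [h]
  linear_combination
    -2 * (∑ i ∈ range k, ((i : ZMod (p ^ 3)) + 1)⁻¹ ^ 2) * natCast_pow_self p 3 -
      p * mul_inv_of_unit _ hunit

theorem natCast_binomTerm_pred (hp : 3 < p) : (binomTerm p (p - 1) : ZMod (p ^ 3)) = 1 := by
  have hnat :
      binomTerm p (p - 1) = ((p + (p - 1)).choose (p - 1) * (p - 1).choose (p - 1)) ^ 2 := by
    obtain ⟨m, rfl⟩ : ∃ m, p = m + 1 := ⟨p - 1, by omega⟩
    rw [binomTerm, Nat.add_sub_cancel, show m + 1 + m = 2 * m + 1 by ring, choose_symm_half]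
    ring
  rw [hnat, Nat.cast_pow, natCast_choose_mul_choose_sq (by omega)]
  linear_combination -2 * prime_sq_mul_sum_range_inv_add_one_sq hp

theorem prime_mul_sum_range_inv_add_one (hp : 3 < p) :
    (p : ZMod (p ^ 3)) * ∑ i ∈ range (p - 1), ((i : ZMod (p ^ 3)) + 1)⁻¹ = 0 := by
  set H := ∑ i ∈ range (p - 1), ((i : ZMod (p ^ 3)) + 1)⁻¹
  have hreflect : ∑ i ∈ range (p - 1), (((p - 1 - 1 - i : ℕ) : ZMod (p ^ 3)) + 1)⁻¹ = H :=
    sum_range_reflect (fun i => ((i : ZMod (p ^ 3)) + 1)⁻¹) (p - 1)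
  have hpair : ∀ i ∈ range (p - 1), (p : ZMod (p ^ 3)) *
      (((i : ZMod (p ^ 3)) + 1)⁻¹ + (((p - 1 - 1 - i : ℕ) : ZMod (p ^ 3)) + 1)⁻¹) =
        -((p : ZMod (p ^ 3)) ^ 2 * ((i : ZMod (p ^ 3)) + 1)⁻¹ ^ 2) := by
    intro i hi
    rw [mem_range] at hi
    set a := (i : ZMod (p ^ 3)) + 1
    set b := ((p - 1 - 1 - i : ℕ) : ZMod (p ^ 3)) + 1
    have ha : a * a⁻¹ = 1 := mul_inv_of_unit _ (isUnit_natCast_add_one (by omega) 3)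
    have hb : b * b⁻¹ = 1 := mul_inv_of_unit _ (isUnit_natCast_add_one (by omega) 3)
    have hab : a + b = p := by
      have h := congrArg (Nat.cast : ℕ → ZMod (p ^ 3))
        (show i + 1 + (p - 1 - 1 - i + 1) = p by omega)
      push_cast at h
      linear_combination h
    -- `a⁻¹ + b⁻¹ = p a⁻¹ b⁻¹` and `p^2 b = -p^2 a` since `a + b = p`
    linear_combination (-(p * b⁻¹) - p ^ 2 * a⁻¹ * b⁻¹ : ZMod (p ^ 3)) * ha +
      (-(p * a⁻¹) - p ^ 2 * a⁻¹ ^ 2 : ZMod (p ^ 3)) * hb +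
      (p * a⁻¹ * b⁻¹ + p ^ 2 * a⁻¹ ^ 2 * b⁻¹ : ZMod (p ^ 3)) * hab +
      a⁻¹ ^ 2 * b⁻¹ * natCast_pow_self p 3
  have htwo : IsUnit (2 : ZMod (p ^ 3)) := by
    exact_mod_cast isUnit_natCast_of_not_dvd (Nat.not_dvd_of_pos_of_lt two_pos (by omega)) 3
  refine htwo.mul_left_cancel ?_
  calc 2 * ((p : ZMod (p ^ 3)) * H) = p * (H + H) := by ring
    _ = ∑ i ∈ range (p - 1), (p : ZMod (p ^ 3)) *
          (((i : ZMod (p ^ 3)) + 1)⁻¹ + (((p - 1 - 1 - i : ℕ) : ZMod (p ^ 3)) + 1)⁻¹) := by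
        nth_rewrite 2 [← hreflect]
        rw [← sum_add_distrib, mul_sum]
    _ = -((p : ZMod (p ^ 3)) ^ 2 * ∑ i ∈ range (p - 1), ((i : ZMod (p ^ 3)) + 1)⁻¹ ^ 2) := by
        rw [sum_congr rfl hpair, sum_neg_distrib, mul_sum]
    _ = 2 * 0 := by rw [prime_sq_mul_sum_range_inv_add_one_sq hp, neg_zero, mul_zero]

theorem natCast_sum_binomTerm (hp : 3 < p) :
    ((∑ k ∈ range p, binomTerm p k : ℕ) : ZMod (p ^ 3)) = 1 := by
  rw [show range p = range (p - 1 + 1) by congr; omega, sum_range_succ, Nat.cast_add, Nat.cast_sum,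
    sum_congr rfl fun k hk => natCast_binomTerm (by rw [mem_range] at hk; omega), ← mul_sum,
    prime_mul_sum_range_inv_add_one hp, natCast_binomTerm_pred hp, zero_add]

theorem stmt17 (p : ℕ) (hp : p.Prime) (hp3 : 3 < p) :
    (∑ k ∈ Finset.range p,
        Nat.choose (p + k) (k + 1) * Nat.choose (p + k) k * (Nat.choose (p - 1) k) ^ 2) ≡
      1 [MOD 2 * p ^ 3] := by
  have := Fact.mk hp
  have hodd : Odd p := hp.odd_of_ne_two (by omega)
  refine (Nat.modEq_and_modEq_iff_modEq_mul ((Nat.coprime_two_left.2 hodd).pow_right 3)).1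
    ⟨sum_binomTerm_modEq_two hodd, ?_⟩
  rw [← ZMod.natCast_eq_natCast_iff, Nat.cast_one]
  exact natCast_sum_binomTerm hp3
end
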